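/- For every positive integer n there exists a constant C > 0 such that for every vector e ∈ ℝⁿ one has ∫_{B₄(0) \ B_{1/4}(0)} |e| / (1 + (e·η)²) dη ≤ C, where the integral is over the annulus {η ∈ ℝⁿ : 1/4 < |η| < 4} with respect to Lebesgue measure, |e| is the Euclidean norm, and e·η is the Euclidean inner product. -/

import Mathlib

/-!
Rotating `e` onto a coordinate axis turns the integrand into `|e| / (1 + |e|² t²)`, a function
of the single coordinate `t = η i`. Enlarging the annulus to the cube `(-4, 4)ⁿ`, Fubini gives
`8ⁿ⁻¹ ∫_{-4}^{4} |e| / (1 + |e|² t²) dt = 8ⁿ⁻¹ (arctan (4|e|) - arctan (-4|e|))`,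
which is less than `8ⁿ⁻¹ π`.
-/

open MeasureTheory Real Set

theorem intervalIntegral_div_one_add_mul_sq (r a b : ℝ) :
    ∫ t in a..b, r / (1 + (r * t) ^ 2) = arctan (r * b) - arctan (r * a) := by
  simp_rw [div_eq_mul_inv, intervalIntegral.integral_const_mul]
  exact (intervalIntegral.mul_integral_comp_mul_left (f := fun x => (1 + x ^ 2)⁻¹) r).trans
    integral_inv_one_add_sq

theorem setIntegral_Ioo_div_one_add_mul_sq_le_pi (r : ℝ) {a b : ℝ} (hab : a ≤ b) :
    ∫ t in Ioo a b, r / (1 + (r * t) ^ 2) ≤ π := by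
  rw [← integral_Ioc_eq_integral_Ioo, ← intervalIntegral.integral_of_le hab,
    intervalIntegral_div_one_add_mul_sq]
  linarith [arctan_lt_pi_div_two (r * b), neg_pi_div_two_lt_arctan (r * a)]

theorem MeasureTheory.integral_comp_eval_eq_mul {ι : Type*} [Fintype ι] [DecidableEq ι]
    {X : ι → Type*} [∀ i, MeasurableSpace (X i)] (μ : ∀ i, Measure (X i))
    [∀ i, IsFiniteMeasure (μ i)] {i : ι} {f : X i → ℝ}
    (hf : AEStronglyMeasurable f (μ i)) :
    ∫ x, f (x i) ∂Measure.pi μ =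
      (∏ j ∈ Finset.univ.erase i, μ j univ).toReal * ∫ x, f x ∂μ i := by
  rw [← integral_map (measurable_pi_apply i).aemeasurable
      (by rw [Measure.pi_map_eval]; exact hf.smul_measure _),
    Measure.pi_map_eval, integral_smul_measure, smul_eq_mul]

section EuclideanSpace

variable {ι : Type*} [Fintype ι]

theorem EuclideanSpace.exists_linearIsometryEquiv_inner_eq_norm_mul (e : EuclideanSpace ℝ ι)
    (i : ι) :
    ∃ L : EuclideanSpace ℝ ι ≃ₗᵢ[ℝ] EuclideanSpace ℝ ι,
      ∀ η, inner ℝ e (L η) = ‖e‖ * η i := by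
  classical
  set v := EuclideanSpace.single i ‖e‖
  have hv : ‖v‖ = ‖e‖ := by simp [v]
  set L := Submodule.reflection (ℝ ∙ (v - e))ᗮ
  have hL : L v = e := Submodule.reflection_sub hv
  refine ⟨L, fun η => ?_⟩
  calc inner ℝ e (L η) = inner ℝ (L v) (L η) := by rw [hL]
    _ = ‖e‖ * η i := by simp [v, EuclideanSpace.inner_single_left]

theorem EuclideanSpace.setIntegral_comp_inner_eq_norm_mul (e : EuclideanSpace ℝ ι) (i : ι)
    (f : ℝ → ℝ) {s : Set (EuclideanSpace ℝ ι)}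
    (hs : ∀ L : EuclideanSpace ℝ ι ≃ₗᵢ[ℝ] EuclideanSpace ℝ ι, L ⁻¹' s = s) :
    ∫ η in s, f (inner ℝ e η) = ∫ η in s, f (‖e‖ * η i) := by
  obtain ⟨L, hL⟩ := exists_linearIsometryEquiv_inner_eq_norm_mul e i
  rw [← L.measurePreserving.setIntegral_preimage_emb L.toHomeomorph.measurableEmbedding,
    hs L]
  simp only [hL]

theorem EuclideanSpace.integrableOn_box_comp_apply {s : ι → Set ℝ}
    (hs : ∀ j, volume (s j) ≠ ⊤)
    {i : ι} {f : ℝ → ℝ} (hf : IntegrableOn f (s i)) :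
    IntegrableOn (fun η : EuclideanSpace ℝ ι => f (η i)) (WithLp.ofLp ⁻¹' univ.pi s) := by
  -- makes each `volume.restrict (s j)` a finite measure
  have := fun j => Fact.mk (hs j).lt_top
  refine ((PiLp.volume_preserving_ofLp ι).integrableOn_comp_preimage
    (MeasurableEquiv.toLp 2 (ι → ℝ)).symm.measurableEmbedding (f := fun x => f (x i))).mpr ?_
  rw [IntegrableOn, volume_pi, Measure.restrict_pi_pi]
  exact integrable_comp_eval hf

theorem EuclideanSpace.setIntegral_box_comp_apply [DecidableEq ι] {s : ι → Set ℝ}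
    (hs : ∀ j, volume (s j) ≠ ⊤) (i : ι) {f : ℝ → ℝ}
    (hf : AEStronglyMeasurable f (volume.restrict (s i))) :
    ∫ η in (WithLp.ofLp ⁻¹' univ.pi s : Set (EuclideanSpace ℝ ι)), f (η i) =
      (∏ j ∈ Finset.univ.erase i, volume (s j)).toReal * ∫ t in s i, f t := by
  have := fun j => Fact.mk (hs j).lt_top
  rw [(PiLp.volume_preserving_ofLp ι).setIntegral_preimage_emb
    (MeasurableEquiv.toLp 2 (ι → ℝ)).symm.measurableEmbedding (fun x => f (x i)),
    volume_pi, Measure.restrict_pi_pi, integral_comp_eval_eq_mul _ hf]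
  simp

end EuclideanSpace

theorem stmt0 (n : ℕ) :
    ∃ C : ℝ, 0 < C ∧ ∀ e : EuclideanSpace ℝ (Fin n),
      (∫ η in Metric.ball (0 : EuclideanSpace ℝ (Fin n)) 4 \
          Metric.ball (0 : EuclideanSpace ℝ (Fin n)) (1 / 4),
        ‖e‖ / (1 + (inner ℝ e η : ℝ) ^ 2)) ≤ C := by
  refine ⟨π * 8 ^ (n - 1), by positivity, fun e => ?_⟩
  rcases isEmpty_or_nonempty (Fin n) with hn | hn
  · simp only [Subsingleton.elim e 0, norm_zero, zero_div, integral_zero]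
    positivity
  obtain ⟨i⟩ := hn
  set annulus := Metric.ball (0 : EuclideanSpace ℝ (Fin n)) 4 \ Metric.ball 0 (1 / 4)
  set g : ℝ → ℝ := fun t => ‖e‖ / (1 + (‖e‖ * t) ^ 2)
  set box : Set (EuclideanSpace ℝ (Fin n)) := WithLp.ofLp ⁻¹' univ.pi fun _ => Ioo (-4) 4
  have hg : Continuous g := continuous_const.div (by fun_prop) fun t => by positivity
  have hg_int : IntegrableOn g (Ioo (-4) 4) := hg.integrableOn_Icc.mono_set Ioo_subset_Icc_self
  have hvol : ∀ _ : Fin n, volume (Ioo (-4 : ℝ) 4) ≠ ⊤ := fun _ => measure_Ioo_lt_top.ne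
  have hsub : annulus ⊆ box := fun η hη j _ =>
    abs_lt.mp ((PiLp.norm_apply_le η j).trans_lt (mem_ball_zero_iff.mp hη.1))
  calc _ = ∫ η in annulus, g (η i) :=
        EuclideanSpace.setIntegral_comp_inner_eq_norm_mul e i (fun t => ‖e‖ / (1 + t ^ 2))
          fun L => by simp [preimage_sdiff, annulus, L.preimage_ball]
    _ ≤ ∫ η in box, g (η i) :=
        setIntegral_mono_set (EuclideanSpace.integrableOn_box_comp_apply hvol hg_int)
          (ae_of_all _ fun η => by positivity) hsub.eventuallyLE
    _ = 8 ^ (n - 1) * ∫ t in Ioo (-4) 4, g t := by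
        rw [EuclideanSpace.setIntegral_box_comp_apply hvol i hg.aestronglyMeasurable]
        norm_num [Real.volume_Ioo]
    _ ≤ 8 ^ (n - 1) * π := by
        gcongr
        exact setIntegral_Ioo_div_one_add_mul_sq_le_pi _ (by norm_num)
    _ = π * 8 ^ (n - 1) := mul_comm _ _
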